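/- arXiv:1105.3538 — 5 statements merged into one kernel-verified Lean document; each statement's English description precedes it below -/
import Mathlib

section
/- (Holland's schema theorem.) Assume ℓ ≥ 2. Let x ∈ Λ, let f : Ω → ℝ_{≥0} satisfy Σ_{j∈Ω} f_j x_j > 0, let c ∈ [0,1], p ∈ [0,1], and let y = U(C(F(x))), where F is proportional selection with fitness f, C is the crossover heuristic for one-point crossover with crossover rate c, and U is the mutation heuristic for independent bitwise mutation with all rates p_i = p. Then for every u ∈ Ω and k ∈ Ω_u, y_k^{(u)} ≥ ((Σ_{j ∈ Ω_{ū}} f_{j⊕k} x_{j⊕k}) / (Σ_{j∈Ω} f_j x_j)) · (1 − c·L(u)/(ℓ−1)) · (1−p)^{#u}. -/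
/-!
Only transmissions that certainly keep the offspring in the schema `H = {v : v ⊗ u = k}` are
counted. A mutation mask that misses every bit of `u` maps `H` into itself, and the probability
of such a mask factorizes bitwise into `(1 - p)^{#u}`. A crossover mask `m` with `m ⊗ u ∈ {0, u}`
takes all bits of `u` from one parent, so the child lies in `H` whenever that parent does; the
other masks contribute nonnegatively. These preserving masks are closed under complement, and the
one-point mask `2^i - 1` fails to preserve `u` exactly when `lo(u) < i ≤ hi(u)`, which leaves the
mass `1 - c L(u)/(ℓ-1)`.
-/
open Finset

noncomputable section

/-- `#u`: the number of one-bits of `u` (sum of binary digits). -/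
def pc (u : ℕ) : ℕ := (Nat.digits 2 u).sum

/-- `ū`: the bitwise complement of `u` within `ℓ` bits. -/
def cpl (ℓ u : ℕ) : ℕ := u ^^^ (2 ^ ℓ - 1)

/-- `Ω_u`: the set of `v < 2^ℓ` with `v ⊗ u = v`. -/
def omg (ℓ u : ℕ) : Finset ℕ := (Finset.range (2 ^ ℓ)).filter (fun v => v &&& u = v)

/-- `I(u)`: the set of indices `i < ℓ` where bit `i` of `u` is one. -/
def idx (ℓ u : ℕ) : Finset ℕ := (Finset.range ℓ).filter (fun i => u.testBit i)

/-- The schema average `x_k^{(u)} = Σ_{i ∈ Ω_{ū}} x_{i ⊕ k}`. -/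
def schAvg (ℓ : ℕ) (x : ℕ → ℝ) (u k : ℕ) : ℝ := ∑ i ∈ omg ℓ (cpl ℓ u), x (i ^^^ k)

/-- The Walsh transform `x̂ = W x`, with `W_{i,j} = n^{-1/2} (-1)^{i^T j}`. -/
def walsh (ℓ : ℕ) (x : ℕ → ℝ) (k : ℕ) : ℝ :=
  (Real.sqrt (2 ^ ℓ))⁻¹ * ∑ j ∈ Finset.range (2 ^ ℓ), (-1 : ℝ) ^ pc (k &&& j) * x j

/-- Proportional selection `F(x)_k = f_k x_k / Σ_j f_j x_j`. -/
def propSel (ℓ : ℕ) (f x : ℕ → ℝ) (k : ℕ) : ℝ :=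
  f k * x k / ∑ j ∈ Finset.range (2 ^ ℓ), f j * x j

/-- The crossover heuristic for a crossover-mask distribution `χ`. -/
def crossH (ℓ : ℕ) (χ : ℕ → ℝ) (x : ℕ → ℝ) (k : ℕ) : ℝ :=
  ∑ i ∈ Finset.range (2 ^ ℓ), ∑ j ∈ Finset.range (2 ^ ℓ), x i * x j *
    ∑ m ∈ Finset.range (2 ^ ℓ), ((χ m + χ (cpl ℓ m)) / 2) *
      (if (i &&& m) ^^^ (j &&& cpl ℓ m) = k then (1 : ℝ) else 0)

/-- The mutation heuristic for a mutation-mask distribution `μ`. -/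
def mutH (ℓ : ℕ) (μ : ℕ → ℝ) (x : ℕ → ℝ) (k : ℕ) : ℝ :=
  ∑ j ∈ Finset.range (2 ^ ℓ), μ (j ^^^ k) * x j

/-- Mask distribution of independent bitwise mutation with rates `p i`:
`μ_m = ∏_i p_i^{m_i} (1-p_i)^{1-m_i}` (with `0^0 = 1`). -/
def mutDist (ℓ : ℕ) (p : ℕ → ℝ) (m : ℕ) : ℝ :=
  ∏ i ∈ Finset.range ℓ, (if m.testBit i then p i else 1 - p i)

/-- Mask distribution of one-point crossover with crossover rate `c` (for `ℓ ≥ 2`). -/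
def onePoint (ℓ : ℕ) (c : ℝ) (m : ℕ) : ℝ :=
  if m = 0 then 1 - c
  else if ∃ i ∈ Finset.Ico 1 ℓ, m = 2 ^ i - 1 then c / ((ℓ : ℝ) - 1)
  else 0

/-- `hi(u)`: index of the highest one-bit of `u` (`hi 0 = 0`). -/
def hiBit (u : ℕ) : ℕ := Nat.log2 u

/-- `lo(u)`: index of the lowest one-bit of `u` (`lo 0 = ℓ - 1`). -/
def loBit (ℓ u : ℕ) : ℕ := if u = 0 then ℓ - 1 else padicValNat 2 u

/-- The defining length `L(u) = hi(u) - lo(u)`. -/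
def defLen (ℓ u : ℕ) : ℕ := hiBit u - loBit ℓ u

def schema (ℓ u k : ℕ) : Finset ℕ := (range (2 ^ ℓ)).filter (fun v => v &&& u = k)

theorem mem_schema {ℓ u k v : ℕ} : v ∈ schema ℓ u k ↔ v < 2 ^ ℓ ∧ v &&& u = k := by
  simp [schema]

theorem schema_subset_range {ℓ u k : ℕ} : schema ℓ u k ⊆ range (2 ^ ℓ) :=
  filter_subset _ _

theorem omg_cpl_eq_schema_zero (ℓ u : ℕ) : omg ℓ (cpl ℓ u) = schema ℓ u 0 := by
  ext i
  simp only [omg, schema, mem_filter, mem_range, and_congr_right_iff]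
  intro hi
  rw [cpl, Nat.and_xor_distrib_left, Nat.and_two_pow_sub_one_eq_mod, Nat.mod_eq_of_lt hi]
  simp

theorem sum_schema_xor (ℓ u : ℕ) {k j : ℕ} (hj : j ∈ schema ℓ u k) (g : ℕ → ℝ) :
    ∑ k' ∈ schema ℓ u k, g (j ^^^ k') = ∑ e ∈ schema ℓ u 0, g e := by
  rw [mem_schema] at hj
  have xor_xor : ∀ a, j ^^^ (j ^^^ a) = a := fun a => by
    rw [← Nat.xor_assoc, Nat.xor_self, Nat.zero_xor]
  refine sum_nbij' (j ^^^ ·) (j ^^^ ·) (fun a ha => ?_) (fun a ha => ?_) (fun a _ => xor_xor a)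
    (fun a _ => xor_xor a) (fun _ _ => rfl) <;>
  · rw [mem_schema] at ha ⊢
    refine ⟨Nat.xor_lt_two_pow hj.1 ha.1, ?_⟩
    rw [Nat.and_xor_distrib_right, hj.2, ha.2]
    simp

theorem schAvg_eq_sum_schema {ℓ u k : ℕ} (hk : k ∈ schema ℓ u k) (z : ℕ → ℝ) :
    schAvg ℓ z u k = ∑ w ∈ schema ℓ u k, z w := by
  rw [schAvg, omg_cpl_eq_schema_zero, ← sum_schema_xor ℓ u hk (fun e => z (e ^^^ k))]
  simp [Nat.xor_comm k]

theorem sum_range_two_pow_prod_testBit {R : Type*} [CommSemiring R] (a b : ℕ → R) (ℓ : ℕ) :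
    ∑ e ∈ range (2 ^ ℓ), ∏ i ∈ range ℓ, (if e.testBit i then a i else b i) =
      ∏ i ∈ range ℓ, (a i + b i) := by
  induction ℓ with
  | zero => simp
  | succ n ih =>
    have low : ∀ e ∈ range (2 ^ n), ∏ i ∈ range (n + 1), (if e.testBit i then a i else b i) =
        (∏ i ∈ range n, if e.testBit i then a i else b i) * b n := fun e he => by
      rw [prod_range_succ, Nat.testBit_lt_two_pow (mem_range.mp he), if_neg Bool.false_ne_true]
    have high : ∀ e ∈ range (2 ^ n),
        ∏ i ∈ range (n + 1), (if (2 ^ n + e).testBit i then a i else b i) =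
          (∏ i ∈ range n, if e.testBit i then a i else b i) * a n := fun e he => by
      rw [prod_range_succ, Nat.testBit_two_pow_add_eq, Nat.testBit_lt_two_pow (mem_range.mp he)]
      congr 1
      exact prod_congr rfl fun i hi => by rw [Nat.testBit_two_pow_add_gt (mem_range.mp hi)]
    rw [pow_succ, mul_two, sum_range_add, sum_congr rfl low, sum_congr rfl high, ← sum_mul,
      ← sum_mul, ih, prod_range_succ, mul_add, add_comm]

theorem pc_eq_card_idx {ℓ u : ℕ} (hu : u < 2 ^ ℓ) : pc u = (idx ℓ u).card := by
  induction ℓ generalizing u with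
  | zero => simp_all [pc, idx]
  | succ n ih =>
    have pc_split : pc u = u % 2 + pc (u / 2) := by
      rcases Nat.eq_zero_or_pos u with rfl | hpos
      · simp [pc]
      · rw [pc, Nat.digits_def' one_lt_two hpos, List.sum_cons, pc]
    rw [pc_split, ih (by rw [pow_succ] at hu; omega), idx, idx, card_filter, card_filter,
      sum_range_succ', add_comm]
    simp only [Nat.testBit_add_one, Nat.testBit_zero, decide_eq_true_eq]
    congr 1
    split_ifs <;> omega

theorem sum_schema_zero_mutDist (ℓ u : ℕ) (p : ℕ → ℝ) :
    ∑ e ∈ schema ℓ u 0, mutDist ℓ p e = ∏ i ∈ idx ℓ u, (1 - p i) := by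
  -- Forbidding flips on the bits of `u` amounts to giving those bits flip rate `0`.
  have masked : ∀ e ∈ range (2 ^ ℓ), (if e &&& u = 0 then mutDist ℓ p e else 0) =
      ∏ i ∈ range ℓ, (if e.testBit i then (if u.testBit i then 0 else p i) else 1 - p i) := by
    intro e he
    by_cases h : e &&& u = 0
    · rw [if_pos h, mutDist]
      refine prod_congr rfl fun i _ => ?_
      have hbit := congrArg (Nat.testBit · i) h
      simp only [Nat.testBit_and, Nat.zero_testBit, Bool.and_eq_false_iff] at hbit
      rcases hbit with hb | hb <;> simp [hb]
    · obtain ⟨i, hi⟩ := Nat.exists_testBit_of_ne_zero h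
      rw [Nat.testBit_and, Bool.and_eq_true] at hi
      have hi_lt : i < ℓ := (Nat.pow_lt_pow_iff_right one_lt_two).mp
        ((Nat.ge_two_pow_of_testBit hi.1).trans_lt (mem_range.mp he))
      rw [if_neg h, eq_comm]
      exact prod_eq_zero (mem_range.mpr hi_lt) (by simp [hi.1, hi.2])
  rw [schema, sum_filter, sum_congr rfl masked, sum_range_two_pow_prod_testBit, idx, prod_filter]
  exact prod_congr rfl fun i _ => by split_ifs <;> ring

theorem mutDist_nonneg {ℓ : ℕ} {p : ℕ → ℝ} (hp : ∀ i, p i ∈ Set.Icc (0 : ℝ) 1) (m : ℕ) :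
    0 ≤ mutDist ℓ p m :=
  prod_nonneg fun i _ => by
    split_ifs
    · exact (hp i).1
    · exact sub_nonneg.mpr (hp i).2

theorem sum_schema_mutH_ge (ℓ u k : ℕ) {μ w : ℕ → ℝ} (hμ : ∀ m, 0 ≤ μ m)
    (hw : ∀ i ∈ range (2 ^ ℓ), 0 ≤ w i) :
    (∑ e ∈ schema ℓ u 0, μ e) * ∑ j ∈ schema ℓ u k, w j ≤
      ∑ k' ∈ schema ℓ u k, mutH ℓ μ w k' :=
  calc (∑ e ∈ schema ℓ u 0, μ e) * ∑ j ∈ schema ℓ u k, w j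
      = ∑ j ∈ schema ℓ u k, (∑ k' ∈ schema ℓ u k, μ (j ^^^ k')) * w j := by
        rw [mul_sum]
        exact sum_congr rfl fun j hj => by rw [sum_schema_xor ℓ u hj]
    _ ≤ ∑ j ∈ range (2 ^ ℓ), (∑ k' ∈ schema ℓ u k, μ (j ^^^ k')) * w j :=
        sum_le_sum_of_subset_of_nonneg schema_subset_range fun j hj _ =>
          mul_nonneg (sum_nonneg fun _ _ => hμ _) (hw j hj)
    _ = ∑ k' ∈ schema ℓ u k, mutH ℓ μ w k' := by
        simp only [mutH, sum_mul]
        exact sum_comm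

def preservingMasks (ℓ u : ℕ) : Finset ℕ :=
  (range (2 ^ ℓ)).filter (fun m => m &&& u = 0 ∨ m &&& u = u)

theorem cpl_and {ℓ u : ℕ} (hu : u < 2 ^ ℓ) (m : ℕ) : cpl ℓ m &&& u = (m &&& u) ^^^ u := by
  rw [cpl, Nat.and_xor_distrib_right, Nat.and_comm (2 ^ ℓ - 1) u, Nat.and_two_pow_sub_one_eq_mod,
    Nat.mod_eq_of_lt hu]

theorem crossover_lt {ℓ i j : ℕ} (hi : i < 2 ^ ℓ) (hj : j < 2 ^ ℓ) (m : ℕ) :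
    (i &&& m) ^^^ (j &&& cpl ℓ m) < 2 ^ ℓ :=
  Nat.xor_lt_two_pow (Nat.and_le_left.trans_lt hi) (Nat.and_le_left.trans_lt hj)

theorem crossover_and_of_and_eq_zero {ℓ u m : ℕ} (hu : u < 2 ^ ℓ) (hm : m &&& u = 0) (i j : ℕ) :
    ((i &&& m) ^^^ (j &&& cpl ℓ m)) &&& u = j &&& u := by
  rw [Nat.and_xor_distrib_right, Nat.and_assoc, Nat.and_assoc, cpl_and hu, hm]
  simp

theorem crossover_and_of_and_eq_self {ℓ u m : ℕ} (hu : u < 2 ^ ℓ) (hm : m &&& u = u) (i j : ℕ) :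
    ((i &&& m) ^^^ (j &&& cpl ℓ m)) &&& u = i &&& u := by
  rw [Nat.and_xor_distrib_right, Nat.and_assoc, Nat.and_assoc, cpl_and hu, hm]
  simp

theorem sum_schema_crossH (ℓ u k : ℕ) (χ z : ℕ → ℝ) :
    ∑ k' ∈ schema ℓ u k, crossH ℓ χ z k' =
      ∑ m ∈ range (2 ^ ℓ), (χ m + χ (cpl ℓ m)) / 2 * ∑ i ∈ range (2 ^ ℓ), ∑ j ∈ range (2 ^ ℓ),
        if (i &&& m) ^^^ (j &&& cpl ℓ m) ∈ schema ℓ u k then z i * z j else 0 := by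
  simp only [crossH, mul_sum, mul_ite, mul_one, mul_zero]
  rw [sum_comm]
  conv_rhs => rw [sum_comm]
  refine sum_congr rfl fun i _ => ?_
  rw [sum_comm]
  conv_rhs => rw [sum_comm]
  refine sum_congr rfl fun j _ => ?_
  rw [sum_comm]
  refine sum_congr rfl fun m _ => ?_
  rw [sum_ite_eq, mul_comm]

theorem sum_crossover_mem_schema {ℓ u k m : ℕ} (hu : u < 2 ^ ℓ) (hm : m ∈ preservingMasks ℓ u)
    (z : ℕ → ℝ) :
    ∑ i ∈ range (2 ^ ℓ), ∑ j ∈ range (2 ^ ℓ),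
        (if (i &&& m) ^^^ (j &&& cpl ℓ m) ∈ schema ℓ u k then z i * z j else 0) =
      (∑ i ∈ range (2 ^ ℓ), z i) * ∑ w ∈ schema ℓ u k, z w := by
  have sum_mem : ∀ a, ∑ b ∈ range (2 ^ ℓ), (if b ∈ schema ℓ u k then z a * z b else 0) =
      ∑ w ∈ schema ℓ u k, z a * z w := fun a => by
    rw [sum_ite_mem, inter_eq_right.mpr schema_subset_range]
  have target_mem : ∀ i ∈ range (2 ^ ℓ), ∀ j ∈ range (2 ^ ℓ), ∀ v ∈ range (2 ^ ℓ),
      ((i &&& m) ^^^ (j &&& cpl ℓ m)) &&& u = v &&& u →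
        ((i &&& m) ^^^ (j &&& cpl ℓ m) ∈ schema ℓ u k ↔ v ∈ schema ℓ u k) := by
    intro i hi j hj v hv h
    rw [mem_range] at hi hj hv
    rw [mem_schema, mem_schema, h]
    simp [crossover_lt hi hj, hv]
  rw [sum_mul_sum]
  rcases (mem_filter.mp hm).2 with hm0 | hmu
  · refine sum_congr rfl fun i hi => ?_
    rw [← sum_mem]
    exact sum_congr rfl fun j hj => by
      rw [if_congr (target_mem i hi j hj j hj (crossover_and_of_and_eq_zero hu hm0 i j)) rfl rfl]
  · rw [sum_comm]
    refine sum_congr rfl fun j hj => ?_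
    simp only [mul_comm (z _) (z j)]
    rw [← sum_mem]
    exact sum_congr rfl fun i hi => by
      rw [if_congr (target_mem i hi j hj i hi (crossover_and_of_and_eq_self hu hmu i j)) rfl rfl]

theorem sum_schema_crossH_ge {ℓ u : ℕ} (k : ℕ) (hu : u < 2 ^ ℓ) {χ z : ℕ → ℝ}
    (hχ : ∀ m, 0 ≤ χ m) (hz : ∀ i ∈ range (2 ^ ℓ), 0 ≤ z i)
    (hz1 : ∑ i ∈ range (2 ^ ℓ), z i = 1) :
    (∑ m ∈ preservingMasks ℓ u, (χ m + χ (cpl ℓ m)) / 2) * ∑ w ∈ schema ℓ u k, z w ≤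
      ∑ k' ∈ schema ℓ u k, crossH ℓ χ z k' := by
  rw [sum_schema_crossH, sum_mul]
  calc ∑ m ∈ preservingMasks ℓ u, (χ m + χ (cpl ℓ m)) / 2 * ∑ w ∈ schema ℓ u k, z w
      = ∑ m ∈ preservingMasks ℓ u, (χ m + χ (cpl ℓ m)) / 2 *
          ∑ i ∈ range (2 ^ ℓ), ∑ j ∈ range (2 ^ ℓ),
            (if (i &&& m) ^^^ (j &&& cpl ℓ m) ∈ schema ℓ u k then z i * z j else 0) :=
        sum_congr rfl fun m hm => by rw [sum_crossover_mem_schema hu hm, hz1, one_mul]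
    _ ≤ _ := sum_le_sum_of_subset_of_nonneg (filter_subset _ _) fun m _ _ =>
        mul_nonneg (by linarith [hχ m, hχ (cpl ℓ m)]) <| sum_nonneg fun i hi =>
          sum_nonneg fun j hj => ite_nonneg (mul_nonneg (hz i hi) (hz j hj)) le_rfl

theorem sum_preservingMasks_symm {ℓ u : ℕ} (hu : u < 2 ^ ℓ) (χ : ℕ → ℝ) :
    ∑ m ∈ preservingMasks ℓ u, (χ m + χ (cpl ℓ m)) / 2 = ∑ m ∈ preservingMasks ℓ u, χ m := by
  have cpl_mem : ∀ m ∈ preservingMasks ℓ u, cpl ℓ m ∈ preservingMasks ℓ u := by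
    intro m hm
    simp only [preservingMasks, mem_filter, mem_range, cpl_and hu] at hm ⊢
    refine ⟨Nat.xor_lt_two_pow hm.1 (Nat.sub_one_lt (by positivity)), ?_⟩
    rcases hm.2 with h | h <;> simp [h]
  have sum_cpl : ∑ m ∈ preservingMasks ℓ u, χ (cpl ℓ m) = ∑ m ∈ preservingMasks ℓ u, χ m :=
    sum_nbij' (cpl ℓ) (cpl ℓ) cpl_mem cpl_mem (fun m _ => xor_cancel_right _ _)
      (fun m _ => xor_cancel_right _ _) fun _ _ => rfl
  rw [← sum_div, sum_add_distrib, sum_cpl]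
  ring

theorem crossH_nonneg {ℓ : ℕ} {χ z : ℕ → ℝ} (hχ : ∀ m, 0 ≤ χ m)
    (hz : ∀ i ∈ range (2 ^ ℓ), 0 ≤ z i) (k : ℕ) : 0 ≤ crossH ℓ χ z k :=
  sum_nonneg fun i hi => sum_nonneg fun j hj => mul_nonneg (mul_nonneg (hz i hi) (hz j hj)) <|
    sum_nonneg fun m _ => mul_nonneg (by linarith [hχ m, hχ (cpl ℓ m)]) (by positivity)

theorem two_pow_sub_one_and_eq_zero_iff {ℓ u : ℕ} (hu0 : u ≠ 0) (i : ℕ) :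
    (2 ^ i - 1) &&& u = 0 ↔ i ≤ loBit ℓ u := by
  rw [Nat.and_comm, Nat.and_two_pow_sub_one_eq_mod, ← Nat.dvd_iff_mod_eq_zero, loBit, if_neg hu0,
    padicValNat_dvd_iff_le hu0]

theorem two_pow_sub_one_and_eq_self_iff {u : ℕ} (hu0 : u ≠ 0) (i : ℕ) :
    (2 ^ i - 1) &&& u = u ↔ hiBit u < i := by
  rw [Nat.and_comm, Nat.and_two_pow_sub_one_eq_mod, Nat.mod_eq_iff_lt (by positivity), hiBit,
    Nat.log2_lt hu0]

theorem filter_range_not_preserving {ℓ u : ℕ} (hu : u < 2 ^ ℓ) :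
    (range ℓ).filter (fun i => ¬ ((2 ^ i - 1) &&& u = 0 ∨ (2 ^ i - 1) &&& u = u)) =
      Ioc (loBit ℓ u) (hiBit u) := by
  rcases eq_or_ne u 0 with rfl | hu0
  · simp [hiBit]
  · have hi_lt : hiBit u < ℓ := (Nat.log2_lt hu0).mpr hu
    ext i
    simp only [mem_filter, mem_range, mem_Ioc, two_pow_sub_one_and_eq_zero_iff (ℓ := ℓ) hu0,
      two_pow_sub_one_and_eq_self_iff hu0]
    omega

theorem onePoint_two_pow_sub_one {ℓ i : ℕ} (hi : i ∈ Ico 1 ℓ) (c : ℝ) :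
    onePoint ℓ c (2 ^ i - 1) = c / ((ℓ : ℝ) - 1) := by
  have : 2 ^ 1 ≤ 2 ^ i := Nat.pow_le_pow_right two_pos (mem_Ico.mp hi).1
  rw [onePoint, if_neg (by omega), if_pos ⟨i, hi, rfl⟩]

theorem onePoint_nonneg {ℓ : ℕ} {c : ℝ} (hc : c ∈ Set.Icc (0 : ℝ) 1) (m : ℕ) :
    0 ≤ onePoint ℓ c m := by
  rw [onePoint]
  split_ifs with _ hm
  · exact sub_nonneg.mpr hc.2
  · obtain ⟨i, hi, -⟩ := hm
    have : (2 : ℝ) ≤ ℓ := by exact_mod_cast (mem_Ico.mp hi).1.trans_lt (mem_Ico.mp hi).2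
    exact div_nonneg hc.1 (by linarith)
  · exact le_rfl

theorem sum_range_onePoint {ℓ : ℕ} (hℓ : 2 ≤ ℓ) (c : ℝ) :
    ∑ i ∈ range ℓ, onePoint ℓ c (2 ^ i - 1) = 1 := by
  obtain ⟨n, rfl⟩ : ∃ n, ℓ = n + 1 := ⟨ℓ - 1, by omega⟩
  have hn : (n : ℝ) ≠ 0 := by exact_mod_cast (by omega : n ≠ 0)
  rw [sum_range_succ', sum_congr rfl fun i hi =>
      onePoint_two_pow_sub_one (mem_Ico.mpr ⟨by omega, by simp at hi; omega⟩) c,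
    sum_const, card_range, nsmul_eq_mul, pow_zero, Nat.sub_self, onePoint, if_pos rfl]
  rw [Nat.cast_add_one, add_sub_cancel_right, mul_div_cancel₀ c hn]
  ring

theorem sum_filter_onePoint {ℓ : ℕ} (hℓ : 0 < ℓ) (q : ℕ → Prop) [DecidablePred q] (c : ℝ) :
    ∑ m ∈ (range (2 ^ ℓ)).filter q, onePoint ℓ c m =
      ∑ i ∈ (range ℓ).filter (fun i => q (2 ^ i - 1)), onePoint ℓ c (2 ^ i - 1) := by
  have inj : Set.InjOn (fun i => 2 ^ i - 1) ((range ℓ).filter (fun i => q (2 ^ i - 1)) : Set ℕ) :=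
    fun a _ b _ h => Nat.pow_right_injective le_rfl <| show 2 ^ a = 2 ^ b by
      have := Nat.one_le_two_pow (n := a); have := Nat.one_le_two_pow (n := b); simp at h; omega
  rw [← sum_image inj]
  refine (sum_subset (fun m hm => ?_) (fun m hm hm_not => ?_)).symm
  · obtain ⟨i, hi, rfl⟩ := mem_image.mp hm
    rw [mem_filter, mem_range] at hi ⊢
    have := Nat.pow_lt_pow_right one_lt_two hi.1
    have := Nat.one_le_two_pow (n := i)
    exact ⟨by omega, hi.2⟩
  · rw [mem_filter] at hm
    have not_mask : ∀ i < ℓ, m ≠ 2 ^ i - 1 := fun i hi hmi =>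
      hm_not (mem_image.mpr ⟨i, mem_filter.mpr ⟨mem_range.mpr hi, hmi ▸ hm.2⟩, hmi.symm⟩)
    rw [onePoint, if_neg (by simpa using not_mask 0 hℓ), if_neg]
    rintro ⟨i, hi, hmi⟩
    exact not_mask i (mem_Ico.mp hi).2 hmi

theorem sum_preservingMasks_onePoint {ℓ u : ℕ} (hℓ : 2 ≤ ℓ) (hu : u < 2 ^ ℓ) (c : ℝ) :
    ∑ m ∈ preservingMasks ℓ u, onePoint ℓ c m = 1 - c * (defLen ℓ u : ℝ) / ((ℓ : ℝ) - 1) := by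
  have on_Ioc : ∀ i ∈ Ioc (loBit ℓ u) (hiBit u), onePoint ℓ c (2 ^ i - 1) = c / ((ℓ : ℝ) - 1) := by
    intro i hi
    have hi' := (filter_range_not_preserving hu).symm ▸ hi
    rw [mem_Ioc] at hi
    rw [mem_filter, mem_range] at hi'
    exact onePoint_two_pow_sub_one (mem_Ico.mpr ⟨by omega, hi'.1⟩) c
  have total := sum_range_onePoint hℓ c
  rw [← sum_filter_add_sum_filter_not (range ℓ)
      (fun i => (2 ^ i - 1) &&& u = 0 ∨ (2 ^ i - 1) &&& u = u), filter_range_not_preserving hu,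
    sum_congr rfl on_Ioc, sum_const, Nat.card_Ioc, nsmul_eq_mul] at total
  rw [preservingMasks, sum_filter_onePoint (by omega), defLen]
  linear_combination total

theorem propSel_nonneg {ℓ : ℕ} {f x : ℕ → ℝ} (hf : ∀ j ∈ range (2 ^ ℓ), 0 ≤ f j)
    (hx : ∀ i ∈ range (2 ^ ℓ), 0 ≤ x i) (hpos : 0 ≤ ∑ j ∈ range (2 ^ ℓ), f j * x j) :
    ∀ i ∈ range (2 ^ ℓ), 0 ≤ propSel ℓ f x i :=
  fun i hi => div_nonneg (mul_nonneg (hf i hi) (hx i hi)) hpos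

theorem sum_propSel {ℓ : ℕ} {f x : ℕ → ℝ} (hpos : ∑ j ∈ range (2 ^ ℓ), f j * x j ≠ 0) :
    ∑ i ∈ range (2 ^ ℓ), propSel ℓ f x i = 1 := by
  simp only [propSel]
  rw [← sum_div, div_self hpos]

theorem holland_schema_theorem_general
    (ℓ : ℕ) (hℓ : 2 ≤ ℓ) (x f : ℕ → ℝ)
    (hx0 : ∀ i ∈ Finset.range (2 ^ ℓ), 0 ≤ x i)
    (hf : ∀ j ∈ Finset.range (2 ^ ℓ), 0 ≤ f j)
    (hpos : 0 < ∑ j ∈ Finset.range (2 ^ ℓ), f j * x j)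
    (c p : ℝ) (hc : c ∈ Set.Icc (0 : ℝ) 1) (hp : p ∈ Set.Icc (0 : ℝ) 1)
    (y : ℕ → ℝ)
    (hy : y = mutH ℓ (mutDist ℓ (fun _ => p)) (crossH ℓ (onePoint ℓ c) (propSel ℓ f x)))
    (u : ℕ) (hu : u < 2 ^ ℓ) (k : ℕ) (hk : k ∈ omg ℓ u) :
    schAvg ℓ y u k ≥
      ((∑ j ∈ omg ℓ (cpl ℓ u), f (j ^^^ k) * x (j ^^^ k)) /
          ∑ j ∈ Finset.range (2 ^ ℓ), f j * x j) *
        (1 - c * (defLen ℓ u : ℝ) / ((ℓ : ℝ) - 1)) * (1 - p) ^ pc u := by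
  have hk_mem : k ∈ schema ℓ u k := by simpa [omg, schema] using hk
  have hz := propSel_nonneg hf hx0 hpos.le
  have hχ := onePoint_nonneg (ℓ := ℓ) hc
  have hcross := sum_schema_crossH_ge k hu hχ hz (sum_propSel hpos.ne')
  rw [sum_preservingMasks_symm hu, sum_preservingMasks_onePoint hℓ hu] at hcross
  have hmut := sum_schema_mutH_ge ℓ u k (mutDist_nonneg (ℓ := ℓ) fun _ => hp)
    fun i _ => crossH_nonneg hχ hz i
  rw [sum_schema_zero_mutDist, prod_const, ← pc_eq_card_idx hu] at hmut
  have hnum : (∑ j ∈ omg ℓ (cpl ℓ u), f (j ^^^ k) * x (j ^^^ k)) /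
      ∑ j ∈ range (2 ^ ℓ), f j * x j = ∑ w ∈ schema ℓ u k, propSel ℓ f x w := by
    simp only [propSel]
    rw [← sum_div]
    exact congrArg (· / _) (schAvg_eq_sum_schema hk_mem fun w => f w * x w)
  rw [ge_iff_le, hnum, hy, schAvg_eq_sum_schema hk_mem]
  calc _ = (1 - p) ^ pc u * ((1 - c * (defLen ℓ u : ℝ) / ((ℓ : ℝ) - 1)) *
        ∑ w ∈ schema ℓ u k, propSel ℓ f x w) := by ring
    _ ≤ _ := mul_le_mul_of_nonneg_left hcross (pow_nonneg (sub_nonneg.mpr hp.2) _)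
    _ ≤ _ := hmut

/-- **Holland's schema theorem.**  For `ℓ ≥ 2`, `x ∈ Λ`, fitness `f ≥ 0` with
`Σ f_j x_j > 0`, crossover rate `c ∈ [0,1]`, mutation rate `p ∈ [0,1]`, and
`y = U(C(F(x)))` (proportional selection, one-point crossover, bitwise mutation),
for every `u ∈ Ω` and `k ∈ Ω_u`:
`y_k^{(u)} ≥ (Σ_{j∈Ω_{ū}} f_{j⊕k} x_{j⊕k} / Σ_j f_j x_j) (1 - c L(u)/(ℓ-1)) (1-p)^{#u}`. -/
theorem holland_schema_theorem
    (ℓ : ℕ) (hℓ : 2 ≤ ℓ) (x f : ℕ → ℝ)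
    (hx0 : ∀ i ∈ Finset.range (2 ^ ℓ), 0 ≤ x i)
    (hx1 : ∑ i ∈ Finset.range (2 ^ ℓ), x i = 1)
    (hf : ∀ j ∈ Finset.range (2 ^ ℓ), 0 ≤ f j)
    (hpos : 0 < ∑ j ∈ Finset.range (2 ^ ℓ), f j * x j)
    (c p : ℝ) (hc : c ∈ Set.Icc (0 : ℝ) 1) (hp : p ∈ Set.Icc (0 : ℝ) 1)
    (y : ℕ → ℝ)
    (hy : y = mutH ℓ (mutDist ℓ (fun _ => p)) (crossH ℓ (onePoint ℓ c) (propSel ℓ f x)))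
    (u : ℕ) (hu : u < 2 ^ ℓ) (k : ℕ) (hk : k ∈ omg ℓ u) :
    schAvg ℓ y u k ≥
      ((∑ j ∈ omg ℓ (cpl ℓ u), f (j ^^^ k) * x (j ^^^ k)) /
          ∑ j ∈ Finset.range (2 ^ ℓ), f j * x j) *
        (1 - c * (defLen ℓ u : ℝ) / ((ℓ : ℝ) - 1)) * (1 - p) ^ pc u :=
  holland_schema_theorem_general ℓ hℓ x f hx0 hf hpos c p hc hp y hy u hu k hk
end
end

section
/- For every u ∈ Ω and every real vector x indexed by Ω, the vector of schema averages equals the inverse Walsh transform (over Ω_u) of the rescaled Walsh coefficients of x: x^{(u)} = W^{(u)} x̂^{(u)}; explicitly, for each k ∈ Ω_u, Σ_{i ∈ Ω_{ū}} x_{i⊕k} = 2^{−#u/2} Σ_{j ∈ Ω_u} (−1)^{j^T k} · 2^{#ū/2} (Wx)_j. -/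
open Finset

noncomputable section

/-!
Identify a natural number with the finite set of its one-bits (`Finset.equivBitIndices`):
`&&&` and `^^^` become intersection and symmetric difference, `pc` becomes cardinality, and
`Ω_u` becomes the powerset of the bits of `u`. Expanding the Walsh transform and exchanging the
sums turns the right-hand side into `Σ_m x_m Σ_{j ∈ Ω_u} (-1)^{#(j ⊗ (m ⊕ k))}`. The inner
character sum factors over the bits of `u` as `∏ (1 ± 1)`, so it is `2^{#u}` when
`(m ⊕ k) ⊗ u = 0`, i.e. when `m ⊕ k ∈ Ω_ū`, and `0` otherwise. The surviving terms are the
schema average, and the scalars cancel because `#u + #ū = ℓ`.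
-/
open scoped symmDiff

namespace Finset

theorem mem_equivBitIndices {n i : ℕ} : i ∈ equivBitIndices n ↔ n.testBit i := by
  simp

theorem equivBitIndices_and (a b : ℕ) :
    equivBitIndices (a &&& b) = equivBitIndices a ∩ equivBitIndices b := by
  ext i
  simp

theorem equivBitIndices_xor (a b : ℕ) :
    equivBitIndices (a ^^^ b) = equivBitIndices a ∆ equivBitIndices b := by
  ext i
  simp only [mem_equivBitIndices, Nat.testBit_xor, mem_symmDiff]
  cases a.testBit i <;> cases b.testBit i <;> simp

theorem and_eq_left_iff_equivBitIndices_subset {a b : ℕ} :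
    a &&& b = a ↔ equivBitIndices a ⊆ equivBitIndices b := by
  rw [← equivBitIndices.injective.eq_iff, equivBitIndices_and, inter_eq_left]

theorem and_eq_zero_iff_disjoint_equivBitIndices {a b : ℕ} :
    a &&& b = 0 ↔ Disjoint (equivBitIndices a) (equivBitIndices b) := by
  rw [← equivBitIndices.injective.eq_iff, equivBitIndices_and, disjoint_iff_inter_eq_empty]
  simp

theorem equivBitIndices_subset_range_iff {n ℓ : ℕ} :
    equivBitIndices n ⊆ range ℓ ↔ n < 2 ^ ℓ := by
  constructor
  · intro h
    refine Nat.lt_pow_two_of_testBit n fun i hi => ?_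
    by_contra hb
    have := mem_range.mp (h (mem_equivBitIndices.mpr (Bool.not_eq_false _ ▸ hb)))
    omega
  · intro h i hi
    have := (Nat.ge_two_pow_of_testBit (mem_equivBitIndices.mp hi)).trans_lt h
    exact mem_range.mpr ((Nat.pow_lt_pow_iff_right one_lt_two).mp this)

theorem equivBitIndices_two_pow_sub_one (ℓ : ℕ) : equivBitIndices (2 ^ ℓ - 1) = range ℓ := by
  ext i
  simp [Nat.testBit_two_pow_sub_one]

theorem neg_one_pow_card_symmDiff {α R : Type*} [DecidableEq α] [Monoid R] [HasDistribNeg R]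
    (s t : Finset α) : (-1 : R) ^ #(s ∆ t) = (-1) ^ #s * (-1) ^ #t := by
  have hcard : #(s ∆ t) + 2 * #(s ∩ t) = #s + #t := by
    rw [symmDiff_eq_sup_sdiff_inf, sup_eq_union, inf_eq_inter,
      card_sdiff_of_subset inter_subset_union, ← card_union_add_card_inter]
    have := card_le_card (inter_subset_union (s := s) (t := t))
    omega
  rw [← pow_add, ← hcard, pow_add, pow_mul, neg_one_sq, one_pow, mul_one]

theorem sum_powerset_neg_one_pow_card_inter {α R : Type*} [DecidableEq α] [CommRing R]
    (s r : Finset α) :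
    ∑ t ∈ s.powerset, (-1 : R) ^ #(t ∩ r) = if Disjoint s r then 2 ^ #s else 0 := by
  have hterm (t : Finset α) : (-1 : R) ^ #(t ∩ r) = ∏ i ∈ t, if i ∈ r then -1 else 1 := by
    rw [prod_ite_mem, prod_const]
  simp_rw [hterm, ← prod_one_add]
  split_ifs with h
  · rw [← prod_const]
    refine prod_congr rfl fun i hi => ?_
    rw [if_neg (disjoint_left.mp h hi)]
    norm_num
  · obtain ⟨i, his, hir⟩ := not_disjoint_iff.mp h
    exact prod_eq_zero his (by simp [hir])

end Finset

theorem pc_eq_card (n : ℕ) : pc n = #(equivBitIndices n) := by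
  rw [Finset.equivBitIndices_apply, List.toFinset_card_of_nodup Nat.bitIndices_nodup]
  induction n using Nat.evenOddRec with
  | h0 => simp [pc]
  | h_even n ih =>
    rcases n.eq_zero_or_pos with rfl | hn
    · simp [pc]
    · rw [Nat.bitIndices_two_mul, List.length_map, ← ih, pc, pc,
        Nat.digits_def' one_lt_two (by omega)]
      simp
  | h_odd n ih =>
    rw [Nat.bitIndices_two_mul_add_one, List.length_cons, List.length_map, ← ih, pc, pc,
      Nat.digits_def' one_lt_two (by omega), show (2 * n + 1) / 2 = n by omega]
    simp [add_comm]

theorem neg_one_pow_pc_xor {R : Type*} [Monoid R] [HasDistribNeg R] (a b : ℕ) :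
    (-1 : R) ^ pc (a ^^^ b) = (-1) ^ pc a * (-1) ^ pc b := by
  simp only [pc_eq_card, equivBitIndices_xor, neg_one_pow_card_symmDiff]

theorem omg_eq_map_powerset {ℓ u : ℕ} (hu : u < 2 ^ ℓ) :
    omg ℓ u = (equivBitIndices u).powerset.map equivBitIndices.symm.toEmbedding := by
  ext j
  simp only [omg, Finset.mem_filter, Finset.mem_range, Finset.mem_map_equiv, Equiv.symm_symm,
    Finset.mem_powerset, and_eq_left_iff_equivBitIndices_subset]
  refine ⟨And.right, fun h => ⟨?_, h⟩⟩
  rw [← and_eq_left_iff_equivBitIndices_subset.mpr h]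
  exact Nat.and_le_right.trans_lt hu

theorem sum_omg_neg_one_pow_pc_and {R : Type*} [CommRing R] {ℓ u : ℕ} (hu : u < 2 ^ ℓ)
    (w : ℕ) : ∑ j ∈ omg ℓ u, (-1 : R) ^ pc (j &&& w) = if w &&& u = 0 then 2 ^ pc u else 0 := by
  rw [omg_eq_map_powerset hu, Finset.sum_map]
  simp only [Equiv.coe_toEmbedding, pc_eq_card, equivBitIndices_and, Equiv.apply_symm_apply]
  convert sum_powerset_neg_one_pow_card_inter _ _ using 2
  rw [and_eq_zero_iff_disjoint_equivBitIndices, disjoint_comm]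

theorem equivBitIndices_cpl {ℓ u : ℕ} (hu : u < 2 ^ ℓ) :
    equivBitIndices (cpl ℓ u) = range ℓ \ equivBitIndices u := by
  rw [cpl, equivBitIndices_xor, equivBitIndices_two_pow_sub_one,
    symmDiff_of_le (equivBitIndices_subset_range_iff.mpr hu)]

theorem pc_add_pc_cpl {ℓ u : ℕ} (hu : u < 2 ^ ℓ) : pc u + pc (cpl ℓ u) = ℓ := by
  rw [pc_eq_card, pc_eq_card, equivBitIndices_cpl hu, add_comm,
    Finset.card_sdiff_add_card_eq_card (equivBitIndices_subset_range_iff.mpr hu), card_range]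

theorem mem_omg_cpl {ℓ u i : ℕ} (hu : u < 2 ^ ℓ) :
    i ∈ omg ℓ (cpl ℓ u) ↔ i < 2 ^ ℓ ∧ i &&& u = 0 := by
  simp only [omg, Finset.mem_filter, Finset.mem_range, and_eq_left_iff_equivBitIndices_subset,
    and_eq_zero_iff_disjoint_equivBitIndices, equivBitIndices_cpl hu, Finset.subset_sdiff,
    equivBitIndices_subset_range_iff]
  tauto

theorem schAvg_eq_sum_filter {ℓ u k : ℕ} (hu : u < 2 ^ ℓ) (hk : k < 2 ^ ℓ) (x : ℕ → ℝ) :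
    schAvg ℓ x u k = ∑ m ∈ range (2 ^ ℓ) with (m ^^^ k) &&& u = 0, x m := by
  refine Finset.sum_nbij' (· ^^^ k) (· ^^^ k) ?_ ?_ ?_ ?_ ?_
  · intro i hi
    obtain ⟨hi2, hiu⟩ := (mem_omg_cpl hu).mp hi
    simpa [Nat.xor_assoc, hiu] using Nat.xor_lt_two_pow hi2 hk
  · intro m hm
    obtain ⟨hm2, hmu⟩ := Finset.mem_filter.mp hm
    exact (mem_omg_cpl hu).mpr ⟨Nat.xor_lt_two_pow (Finset.mem_range.mp hm2) hk, hmu⟩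
  all_goals simp

theorem sum_omg_neg_one_pow_mul_walsh {ℓ u k : ℕ} (hu : u < 2 ^ ℓ) (x : ℕ → ℝ) :
    ∑ j ∈ omg ℓ u, (-1 : ℝ) ^ pc (j &&& k) * walsh ℓ x j
      = (√(2 ^ ℓ))⁻¹ * 2 ^ pc u * ∑ m ∈ range (2 ^ ℓ) with (m ^^^ k) &&& u = 0, x m := by
  calc _ = (√(2 ^ ℓ))⁻¹ * ∑ m ∈ range (2 ^ ℓ),
          x m * ∑ j ∈ omg ℓ u, (-1 : ℝ) ^ pc (j &&& (m ^^^ k)) := by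
        simp_rw [walsh, Finset.mul_sum, Nat.and_xor_distrib_left, neg_one_pow_pc_xor]
        rw [Finset.sum_comm]
        refine Finset.sum_congr rfl fun m _ => Finset.sum_congr rfl fun j _ => by ring
    _ = (√(2 ^ ℓ))⁻¹ * ∑ m ∈ range (2 ^ ℓ), x m * if (m ^^^ k) &&& u = 0 then 2 ^ pc u else 0 := by
        simp_rw [sum_omg_neg_one_pow_pc_and hu]
    _ = _ := by
        simp_rw [Finset.sum_filter, Finset.mul_sum]
        refine Finset.sum_congr rfl fun m _ => ?_
        split_ifs <;> ring

theorem schema_averages_eq_walsh_general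
    (ℓ : ℕ) (x : ℕ → ℝ)
    (u : ℕ) (hu : u < 2 ^ ℓ) (k : ℕ) (hk : k ∈ omg ℓ u) :
    schAvg ℓ x u k =
      (Real.sqrt 2 ^ pc u)⁻¹ *
        ∑ j ∈ omg ℓ u, (-1 : ℝ) ^ pc (j &&& k) *
          (Real.sqrt 2 ^ pc (cpl ℓ u) * walsh ℓ x j) := by
  have hk2 : k < 2 ^ ℓ := Finset.mem_range.mp (Finset.mem_filter.mp hk).1
  have hsqrt : √(2 ^ ℓ) = √2 ^ pc u * √2 ^ pc (cpl ℓ u) := by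
    rw [← pow_add, pc_add_pc_cpl hu, Real.sqrt_eq_iff_mul_self_eq (by positivity) (by positivity),
      ← mul_pow, Real.mul_self_sqrt zero_le_two]
  have htwo : (2 : ℝ) ^ pc u = √2 ^ pc u * √2 ^ pc u := by
    rw [← mul_pow, Real.mul_self_sqrt zero_le_two]
  simp_rw [mul_left_comm _ (√2 ^ _), ← Finset.mul_sum, sum_omg_neg_one_pow_mul_walsh hu x,
    schAvg_eq_sum_filter hu hk2 x, hsqrt, htwo]
  field_simp

/-- The schema averages are the inverse Walsh transform (over `Ω_u`) of the rescaled
Walsh coefficients: `x^{(u)} = W^{(u)} x̂^{(u)}`, i.e. for each `k ∈ Ω_u`,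
`Σ_{i ∈ Ω_{ū}} x_{i⊕k} = 2^{-#u/2} Σ_{j ∈ Ω_u} (-1)^{j^T k} 2^{#ū/2} (Wx)_j`. -/
theorem schema_averages_eq_walsh
    (ℓ : ℕ) (hℓ : 1 ≤ ℓ) (x : ℕ → ℝ)
    (u : ℕ) (hu : u < 2 ^ ℓ) (k : ℕ) (hk : k ∈ omg ℓ u) :
    schAvg ℓ x u k =
      (Real.sqrt 2 ^ pc u)⁻¹ *
        ∑ j ∈ omg ℓ u, (-1 : ℝ) ^ pc (j &&& k) *
          (Real.sqrt 2 ^ pc (cpl ℓ u) * walsh ℓ x j) :=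
  schema_averages_eq_walsh_general ℓ x u hu k hk
end
end

section
/- (Holland's approximate schema theorem for one-point crossover.) Assume ℓ ≥ 2. Let x ∈ Λ, let c ∈ [0,1], and let y = C(x) where C is the crossover heuristic for one-point crossover with crossover rate c. Then for every u ∈ Ω and every k ∈ Ω_u, y_k^{(u)} ≥ x_k^{(u)} · (1 − c·L(u)/(ℓ−1)). -/
open Finset

noncomputable section

/-!
The mass that `y = C(x)` puts on the schema `{i : i ⊗ u = k}` is, averaged over the masks `m`,
the product of the masses `x` puts on the part of the schema inside `m` and on the part inside
`m̄`: a child lies in the schema iff its `m`-parent agrees with `k` on `u ⊗ m` and its `m̄`-parent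
on `u ⊗ m̄`. Both factors depend only on `{m, m̄}`, so the symmetrised weights may be replaced by
`χ`. For the mask `0`, and for each cut point of one-point crossover not lying strictly between
`lo(u)` and `hi(u)`, one factor is the total mass `1` and the other the mass of the schema; at
most `L(u)` cut points remain, and their terms are nonnegative.
-/

section Bits

variable {ℓ : ℕ}

theorem and_cpl {a : ℕ} (m : ℕ) (ha : a < 2 ^ ℓ) : a &&& cpl ℓ m = (a &&& m) ^^^ a := by
  rw [cpl, Nat.and_xor_distrib_left, Nat.and_two_pow_sub_one_eq_mod, Nat.mod_eq_of_lt ha]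

theorem and_cpl_self {m : ℕ} (hm : m < 2 ^ ℓ) : m &&& cpl ℓ m = 0 := by
  rw [and_cpl m hm, Nat.and_self, Nat.xor_self]

theorem cpl_cpl (m : ℕ) : cpl ℓ (cpl ℓ m) = m := by
  simp [cpl]

theorem cpl_lt {m : ℕ} (hm : m < 2 ^ ℓ) : cpl ℓ m < 2 ^ ℓ :=
  Nat.xor_lt_two_pow hm (Nat.sub_lt (Nat.two_pow_pos ℓ) one_pos)

theorem and_xor_and_cpl {a : ℕ} (m : ℕ) (ha : a < 2 ^ ℓ) : (a &&& m) ^^^ (a &&& cpl ℓ m) = a := by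
  rw [and_cpl m ha, ← Nat.xor_assoc, Nat.xor_self, Nat.zero_xor]

theorem eq_iff_and_eq_and_and_cpl_eq {a b : ℕ} (m : ℕ) (ha : a < 2 ^ ℓ) (hb : b < 2 ^ ℓ) :
    a = b ↔ a &&& m = b &&& m ∧ a &&& cpl ℓ m = b &&& cpl ℓ m := by
  refine ⟨fun h => h ▸ ⟨rfl, rfl⟩, fun ⟨h, h'⟩ => ?_⟩
  rw [← and_xor_and_cpl m ha, ← and_xor_and_cpl m hb, h, h']

end Bits

def crossChild (ℓ i j m : ℕ) : ℕ := (i &&& m) ^^^ (j &&& cpl ℓ m)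

section Child
variable {ℓ i j m : ℕ}

theorem crossChild_lt (hi : i < 2 ^ ℓ) (hj : j < 2 ^ ℓ) : crossChild ℓ i j m < 2 ^ ℓ :=
  Nat.xor_lt_two_pow (Nat.and_le_left.trans_lt hi) (Nat.and_le_left.trans_lt hj)

theorem crossChild_and (hm : m < 2 ^ ℓ) : crossChild ℓ i j m &&& m = i &&& m := by
  have : cpl ℓ m &&& m = 0 := by rw [Nat.and_comm, and_cpl_self hm]
  rw [crossChild, Nat.and_xor_distrib_right, Nat.and_assoc, Nat.and_self, Nat.and_assoc, this,
    Nat.and_zero, Nat.xor_zero]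

theorem crossChild_and_cpl (hm : m < 2 ^ ℓ) : crossChild ℓ i j m &&& cpl ℓ m = j &&& cpl ℓ m := by
  rw [crossChild, Nat.and_xor_distrib_right, Nat.and_assoc, and_cpl_self hm, Nat.and_assoc,
    Nat.and_self, Nat.and_zero, Nat.zero_xor]

theorem crossChild_and_eq_iff {u k : ℕ} (hi : i < 2 ^ ℓ) (hj : j < 2 ^ ℓ) (hm : m < 2 ^ ℓ)
    (hk : k < 2 ^ ℓ) :
    crossChild ℓ i j m &&& u = k ↔
      i &&& (u &&& m) = k &&& m ∧ j &&& (u &&& cpl ℓ m) = k &&& cpl ℓ m := by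
  have hc := crossChild_lt (m := m) hi hj
  have swap : ∀ a b, a &&& u &&& b = a &&& b &&& u := fun a b => by ac_rfl
  rw [eq_iff_and_eq_and_and_cpl_eq m (Nat.and_le_left.trans_lt hc) hk, swap, swap,
    crossChild_and hm, crossChild_and_cpl hm, Nat.and_assoc, Nat.and_assoc, Nat.and_comm m,
    Nat.and_comm (cpl ℓ m)]

end Child

def schemaMass (ℓ : ℕ) (x : ℕ → ℝ) (v w : ℕ) : ℝ :=
  ∑ i ∈ (range (2 ^ ℓ)).filter (· &&& v = w), x i

def schemaSplitMass (ℓ : ℕ) (x : ℕ → ℝ) (u k m : ℕ) : ℝ :=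
  schemaMass ℓ x (u &&& m) (k &&& m) * schemaMass ℓ x (u &&& cpl ℓ m) (k &&& cpl ℓ m)

section SchemaMass

variable {ℓ : ℕ} {x : ℕ → ℝ}

theorem schemaMass_nonneg (hx0 : ∀ i ∈ range (2 ^ ℓ), 0 ≤ x i) (v w : ℕ) :
    0 ≤ schemaMass ℓ x v w :=
  sum_nonneg fun i hi => hx0 i (mem_filter.1 hi).1

theorem schemaMass_zero_zero : schemaMass ℓ x 0 0 = ∑ i ∈ range (2 ^ ℓ), x i := by
  simp [schemaMass]

theorem schAvg_eq_schemaMass {u k : ℕ} (hu : u < 2 ^ ℓ) (hk : k ∈ omg ℓ u) :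
    schAvg ℓ x u k = schemaMass ℓ x u k := by
  simp only [omg, mem_filter, mem_range] at hk
  refine sum_nbij' (· ^^^ k) (· ^^^ k) (fun i hi => ?_) (fun j hj => ?_)
    (fun i _ => by simp) (fun j _ => by simp) (fun _ _ => rfl)
  · simp only [omg, mem_filter, mem_range] at hi ⊢
    have hiu : i &&& u = 0 := by
      rw [← hi.2, Nat.and_assoc, Nat.and_comm _ u, and_cpl_self hu, Nat.and_zero]
    exact ⟨Nat.xor_lt_two_pow hi.1 hk.1, by rw [Nat.and_xor_distrib_right, hiu, hk.2, Nat.zero_xor]⟩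
  · simp only [omg, mem_filter, mem_range] at hj ⊢
    have hlt := Nat.xor_lt_two_pow hj.1 hk.1
    refine ⟨hlt, ?_⟩
    rw [and_cpl u hlt, Nat.and_xor_distrib_right, hj.2, hk.2, Nat.xor_self, Nat.zero_xor]

variable {u k m : ℕ}

theorem schemaSplitMass_nonneg (hx0 : ∀ i ∈ range (2 ^ ℓ), 0 ≤ x i) :
    0 ≤ schemaSplitMass ℓ x u k m :=
  mul_nonneg (schemaMass_nonneg hx0 _ _) (schemaMass_nonneg hx0 _ _)

theorem schemaSplitMass_cpl : schemaSplitMass ℓ x u k (cpl ℓ m) = schemaSplitMass ℓ x u k m := by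
  rw [schemaSplitMass, schemaSplitMass, cpl_cpl, mul_comm]

theorem schemaSplitMass_of_and_eq_zero (hu : u < 2 ^ ℓ) (hk : k < 2 ^ ℓ) (hku : k &&& u = k)
    (h : u &&& m = 0) :
    schemaSplitMass ℓ x u k m = (∑ i ∈ range (2 ^ ℓ), x i) * schemaMass ℓ x u k := by
  have hkm : k &&& m = 0 := by rw [← hku, Nat.and_assoc, h, Nat.and_zero]
  rw [schemaSplitMass, h, hkm, and_cpl m hu, and_cpl m hk, h, hkm, Nat.zero_xor, Nat.zero_xor,
    schemaMass_zero_zero]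

theorem schemaSplitMass_of_and_eq_self (hu : u < 2 ^ ℓ) (hk : k < 2 ^ ℓ) (hku : k &&& u = k)
    (h : u &&& m = u) :
    schemaSplitMass ℓ x u k m = (∑ i ∈ range (2 ^ ℓ), x i) * schemaMass ℓ x u k := by
  rw [← schemaSplitMass_cpl,
    schemaSplitMass_of_and_eq_zero hu hk hku (by rw [and_cpl m hu, h, Nat.xor_self])]

end SchemaMass

theorem schemaMass_crossH_eq_sum_crossChild (ℓ : ℕ) (χ x : ℕ → ℝ) (u k : ℕ) :
    schemaMass ℓ (crossH ℓ χ x) u k = ∑ i ∈ range (2 ^ ℓ), ∑ j ∈ range (2 ^ ℓ), ∑ m ∈ range (2 ^ ℓ),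
      (χ m + χ (cpl ℓ m)) / 2 * (if crossChild ℓ i j m &&& u = k then x i * x j else 0) := by
  simp_rw [schemaMass, crossH, ← crossChild.eq_1, mul_sum]
  rw [sum_comm]
  refine sum_congr rfl fun i hi => ?_
  rw [sum_comm]
  refine sum_congr rfl fun j hj => ?_
  rw [sum_comm]
  refine sum_congr rfl fun m _ => ?_
  simp only [mul_ite, mul_one, mul_zero, sum_ite_eq, mem_filter, mem_range,
    crossChild_lt (mem_range.1 hi) (mem_range.1 hj), true_and]
  split_ifs <;> ring

theorem schemaMass_crossH (ℓ : ℕ) (χ x : ℕ → ℝ) (u : ℕ) {k : ℕ} (hk : k < 2 ^ ℓ) :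
    schemaMass ℓ (crossH ℓ χ x) u k =
      ∑ m ∈ range (2 ^ ℓ), (χ m + χ (cpl ℓ m)) / 2 * schemaSplitMass ℓ x u k m := by
  rw [schemaMass_crossH_eq_sum_crossChild, sum_congr rfl fun i _ => sum_comm, sum_comm]
  refine sum_congr rfl fun m hm => ?_
  rw [schemaSplitMass, schemaMass, schemaMass, sum_filter, sum_filter, sum_mul_sum, mul_sum]
  refine sum_congr rfl fun i hi => ?_
  rw [mul_sum]
  refine sum_congr rfl fun j hj => ?_
  simp only [crossChild_and_eq_iff (mem_range.1 hi) (mem_range.1 hj) (mem_range.1 hm) hk, ite_and]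
  split_ifs <;> simp

theorem sum_symmetrized_mul {ℓ : ℕ} (χ T : ℕ → ℝ) (hT : ∀ m, T (cpl ℓ m) = T m) :
    ∑ m ∈ range (2 ^ ℓ), (χ m + χ (cpl ℓ m)) / 2 * T m = ∑ m ∈ range (2 ^ ℓ), χ m * T m := by
  have hcpl : ∑ m ∈ range (2 ^ ℓ), χ (cpl ℓ m) * T m = ∑ m ∈ range (2 ^ ℓ), χ m * T m :=
    sum_nbij' (cpl ℓ) (cpl ℓ) (fun m hm => mem_range.2 (cpl_lt (mem_range.1 hm)))
      (fun m hm => mem_range.2 (cpl_lt (mem_range.1 hm))) (fun m _ => cpl_cpl m)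
      (fun m _ => cpl_cpl m) (fun m _ => by rw [hT])
  calc ∑ m ∈ range (2 ^ ℓ), (χ m + χ (cpl ℓ m)) / 2 * T m
      = (∑ m ∈ range (2 ^ ℓ), χ m * T m + ∑ m ∈ range (2 ^ ℓ), χ (cpl ℓ m) * T m) / 2 := by
        rw [← sum_add_distrib, sum_div]
        exact sum_congr rfl fun m _ => by ring
    _ = ∑ m ∈ range (2 ^ ℓ), χ m * T m := by rw [hcpl]; ring

theorem sum_onePoint_mul (ℓ : ℕ) (c : ℝ) (T : ℕ → ℝ) :
    ∑ m ∈ range (2 ^ ℓ), onePoint ℓ c m * T m =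
      (1 - c) * T 0 + c / ((ℓ : ℝ) - 1) * ∑ i ∈ Ico 1 ℓ, T (2 ^ i - 1) := by
  have hcut_ne_zero : ∀ i ∈ Ico 1 ℓ, 2 ^ i - 1 ≠ 0 := fun i hi =>
    Nat.sub_ne_zero_of_lt (Nat.one_lt_two_pow (by grind))
  have hsupp : insert 0 ((Ico 1 ℓ).image (2 ^ · - 1)) ⊆ range (2 ^ ℓ) := by
    simp only [insert_subset_iff, mem_range, Nat.two_pow_pos, image_subset_iff, mem_Ico, true_and]
    exact fun i hi => (Nat.sub_le _ _).trans_lt (Nat.pow_lt_pow_right one_lt_two hi.2)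
  have hinj : Set.InjOn (2 ^ · - 1 : ℕ → ℕ) (Ico 1 ℓ) := fun a _ b _ hab =>
    Nat.pow_right_injective le_rfl (Nat.sub_one_cancel (Nat.two_pow_pos a) (Nat.two_pow_pos b) hab)
  rw [← sum_subset hsupp, sum_insert, sum_image hinj, mul_sum]
  · simp only [onePoint]
    congr 1
    exact sum_congr rfl fun i hi => by rw [if_neg (hcut_ne_zero i hi), if_pos ⟨i, hi, rfl⟩]
  · simpa using fun i h₁ h₂ => hcut_ne_zero i (mem_Ico.2 ⟨h₁, h₂⟩)
  · intro m _ hm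
    simp only [mem_insert, mem_image, not_or] at hm
    rw [onePoint, if_neg hm.1, if_neg (fun ⟨i, hi, h⟩ => hm.2 ⟨i, hi, h.symm⟩), zero_mul]

theorem defLen_eq (ℓ u : ℕ) : defLen ℓ u = Nat.log2 u - padicValNat 2 u := by
  rcases eq_or_ne u 0 with rfl | hu
  · simp [defLen, hiBit, loBit, Nat.log2]
  · rw [defLen, hiBit, loBit, if_neg hu]

theorem card_filter_le_defLen (s : Finset ℕ) (ℓ u : ℕ) :
    (s.filter fun i => u % 2 ^ i ≠ 0 ∧ 2 ^ i ≤ u).card ≤ defLen ℓ u := by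
  rw [defLen_eq, ← Nat.card_Ioc]
  refine card_le_card fun i hi => ?_
  obtain ⟨-, hmod, hle⟩ := mem_filter.1 hi
  have hu : u ≠ 0 := ((Nat.two_pow_pos i).trans_le hle).ne'
  refine mem_Ioc.2 ⟨not_le.1 fun hi => hmod ?_, (Nat.le_log2 hu).2 hle⟩
  exact Nat.mod_eq_zero_of_dvd ((padicValNat_dvd_iff_le hu).2 hi)

theorem sum_schemaSplitMass_cuts_ge {ℓ : ℕ} (hℓ : 1 ≤ ℓ) {x : ℕ → ℝ}
    (hx0 : ∀ i ∈ range (2 ^ ℓ), 0 ≤ x i) (hx1 : ∑ i ∈ range (2 ^ ℓ), x i = 1)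
    {u k : ℕ} (hu : u < 2 ^ ℓ) (hk : k < 2 ^ ℓ) (hku : k &&& u = k) :
    ((ℓ : ℝ) - 1 - defLen ℓ u) * schemaMass ℓ x u k ≤
      ∑ i ∈ Ico 1 ℓ, schemaSplitMass ℓ x u k (2 ^ i - 1) := by
  set A := schemaMass ℓ x u k
  -- the mask `2 ^ i - 1` meets `u` in `u % 2 ^ i`, so it splits `u` iff this is neither `0` nor `u`
  have hcut : ∀ i ∈ Ico 1 ℓ,
      A - (if u % 2 ^ i ≠ 0 ∧ 2 ^ i ≤ u then A else 0) ≤ schemaSplitMass ℓ x u k (2 ^ i - 1) := by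
    intro i _
    split_ifs with hsplit
    · simpa using schemaSplitMass_nonneg hx0
    · rw [not_and_or, not_not, not_le] at hsplit
      rcases hsplit with hmod | hlt
      · rw [schemaSplitMass_of_and_eq_zero hu hk hku (by rwa [Nat.and_two_pow_sub_one_eq_mod])]
        simp [A, hx1]
      · rw [schemaSplitMass_of_and_eq_self hu hk hku
          (by rw [Nat.and_two_pow_sub_one_eq_mod, Nat.mod_eq_of_lt hlt])]
        simp [A, hx1]
  have hA : 0 ≤ A := schemaMass_nonneg hx0 u k
  have hcard := card_filter_le_defLen (Ico 1 ℓ) ℓ u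
  calc ((ℓ : ℝ) - 1 - defLen ℓ u) * A
      ≤ ((ℓ : ℝ) - 1 - ((Ico 1 ℓ).filter fun i => u % 2 ^ i ≠ 0 ∧ 2 ^ i ≤ u).card) * A := by
        gcongr
    _ = ∑ i ∈ Ico 1 ℓ, (A - if u % 2 ^ i ≠ 0 ∧ 2 ^ i ≤ u then A else 0) := by
        rw [sum_sub_distrib, ← sum_filter, sum_const, sum_const, Nat.card_Ico, nsmul_eq_mul,
          nsmul_eq_mul, Nat.cast_sub hℓ]
        push_cast
        ring
    _ ≤ ∑ i ∈ Ico 1 ℓ, schemaSplitMass ℓ x u k (2 ^ i - 1) := sum_le_sum hcut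

/-- **Holland's approximate schema theorem for one-point crossover.**  For `ℓ ≥ 2`,
`x ∈ Λ`, `c ∈ [0,1]`, and `y = C(x)` with one-point crossover at rate `c`:
`y_k^{(u)} ≥ x_k^{(u)} (1 - c L(u)/(ℓ-1))`. -/
theorem holland_approximate_schema_theorem_one_point_crossover
    (ℓ : ℕ) (hℓ : 2 ≤ ℓ) (x : ℕ → ℝ)
    (hx0 : ∀ i ∈ Finset.range (2 ^ ℓ), 0 ≤ x i)
    (hx1 : ∑ i ∈ Finset.range (2 ^ ℓ), x i = 1)
    (c : ℝ) (hc : c ∈ Set.Icc (0 : ℝ) 1)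
    (u : ℕ) (hu : u < 2 ^ ℓ) (k : ℕ) (hk : k ∈ omg ℓ u) :
    schAvg ℓ (crossH ℓ (onePoint ℓ c) x) u k ≥
      schAvg ℓ x u k * (1 - c * (defLen ℓ u : ℝ) / ((ℓ : ℝ) - 1)) := by
  obtain ⟨hk_lt, hku⟩ : k < 2 ^ ℓ ∧ k &&& u = k := by simpa [omg] using hk
  have hℓ_pos : (0 : ℝ) < ℓ - 1 := by
    have : (2 : ℝ) ≤ ℓ := by exact_mod_cast hℓ
    linarith
  have hcuts := sum_schemaSplitMass_cuts_ge (by omega) hx0 hx1 hu hk_lt hku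
  rw [schAvg_eq_schemaMass hu hk, schAvg_eq_schemaMass hu hk, schemaMass_crossH _ _ _ _ hk_lt,
    sum_symmetrized_mul _ _ fun m => schemaSplitMass_cpl, sum_onePoint_mul,
    schemaSplitMass_of_and_eq_zero hu hk_lt hku (Nat.and_zero u), hx1, one_mul, ge_iff_le]
  calc schemaMass ℓ x u k * (1 - c * defLen ℓ u / (ℓ - 1))
      = (1 - c) * schemaMass ℓ x u k
        + c / (ℓ - 1) * (((ℓ : ℝ) - 1 - defLen ℓ u) * schemaMass ℓ x u k) := by
        field_simp
        ring
    _ ≤ _ := by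
        gcongr
        exact div_nonneg hc.1 hℓ_pos.le
end
end

section
/- (The mutation heuristic in the Walsh basis.) Let x ∈ Λ, let U be the mutation heuristic for independent bitwise mutation with rates p_0,…,p_{ℓ−1} ∈ [0,1], set q_i = 1 − 2p_i, and let y = U(x). Then for every u ∈ Ω and every k ∈ Ω_u, ŷ_k^{(u)} = x̂_k^{(u)} · ∏_{i ∈ I(k)} q_i, where x̂ = Wx, ŷ = Wy, and ẑ_k^{(u)} = 2^{#ū/2} ẑ_k. -/
open Finset

noncomputable section

/-
Mutation by a mask distribution `μ` is the XOR-convolution `U(x) = μ ∗ x`, and the Walsh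
characters `j ↦ (-1)^{#(k ⊗ j)}` are multiplicative for `⊕`; hence the Walsh transform turns
the convolution into a pointwise product, `(W U(x))_k = (Σ_m (-1)^{#(k ⊗ m)} μ_m) (W x)_k`.
For independent bitwise mutation the character sum of `μ` factors over the bits, the factor
of bit `i` being `(1 - p_i) + p_i = 1` if `i ∉ I(k)` and `(1 - p_i) - p_i = q_i` if `i ∈ I(k)`.
-/

lemma pc_eq_mod_two_add_pc_div_two (u : ℕ) : pc u = u % 2 + pc (u / 2) := by
  rcases Nat.eq_zero_or_pos u with rfl | hu
  · simp [pc]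
  · rw [pc, Nat.digits_def' one_lt_two hu, List.sum_cons, pc]

lemma neg_one_pow_pc_eq_prod {R : Type*} [CommRing R] {ℓ u : ℕ} (hu : u < 2 ^ ℓ) :
    (-1 : R) ^ pc u = ∏ i ∈ range ℓ, if u.testBit i then -1 else 1 := by
  induction ℓ generalizing u with
  | zero => interval_cases u; simp [pc]
  | succ n ih =>
    have hu2 : u / 2 < 2 ^ n := by omega
    simp only [prod_range_succ', Nat.testBit_succ]
    rw [← ih hu2, pc_eq_mod_two_add_pc_div_two u, pow_add]
    rcases Nat.mod_two_eq_zero_or_one u with h | h <;> simp [Nat.testBit_zero, h, mul_comm]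

lemma neg_one_pow_pc_and_xor {R : Type*} [CommRing R] {ℓ k : ℕ} (hk : k < 2 ^ ℓ) (a b : ℕ) :
    (-1 : R) ^ pc (k &&& (a ^^^ b)) = (-1 : R) ^ pc (k &&& a) * (-1 : R) ^ pc (k &&& b) := by
  have hlt : ∀ c, k &&& c < 2 ^ ℓ := fun c => Nat.and_le_left.trans_lt hk
  rw [neg_one_pow_pc_eq_prod (hlt _), neg_one_pow_pc_eq_prod (hlt _),
    neg_one_pow_pc_eq_prod (hlt _), ← prod_mul_distrib]
  refine prod_congr rfl fun i _ => ?_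
  simp only [Nat.testBit_and, Nat.testBit_xor]
  cases k.testBit i <;> cases a.testBit i <;> cases b.testBit i <;> simp

lemma sum_range_two_pow_xor_left {M : Type*} [AddCommMonoid M] {ℓ a : ℕ} (ha : a < 2 ^ ℓ)
    (f : ℕ → M) : ∑ j ∈ range (2 ^ ℓ), f (a ^^^ j) = ∑ m ∈ range (2 ^ ℓ), f m := by
  have hmem : ∀ j ∈ range (2 ^ ℓ), a ^^^ j ∈ range (2 ^ ℓ) := fun j hj =>
    mem_range.mpr (Nat.xor_lt_two_pow ha (mem_range.mp hj))
  exact sum_nbij' (a ^^^ ·) (a ^^^ ·) hmem hmem (by simp) (by simp) (fun _ _ => rfl)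

theorem walsh_mutH (ℓ : ℕ) (μ x : ℕ → ℝ) {k : ℕ} (hk : k < 2 ^ ℓ) :
    walsh ℓ (mutH ℓ μ x) k =
      (∑ m ∈ range (2 ^ ℓ), (-1 : ℝ) ^ pc (k &&& m) * μ m) * walsh ℓ x k := by
  have hconv : ∑ j ∈ range (2 ^ ℓ), (-1 : ℝ) ^ pc (k &&& j) * mutH ℓ μ x j
      = (∑ m ∈ range (2 ^ ℓ), (-1 : ℝ) ^ pc (k &&& m) * μ m)
        * ∑ j ∈ range (2 ^ ℓ), (-1 : ℝ) ^ pc (k &&& j) * x j := by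
    calc ∑ j ∈ range (2 ^ ℓ), (-1 : ℝ) ^ pc (k &&& j) * mutH ℓ μ x j
        = ∑ i ∈ range (2 ^ ℓ), ∑ j ∈ range (2 ^ ℓ),
            (-1 : ℝ) ^ pc (k &&& j) * μ (i ^^^ j) * x i := by
          simp only [mutH, mul_sum, ← mul_assoc]
          exact sum_comm
      _ = ∑ i ∈ range (2 ^ ℓ), ∑ m ∈ range (2 ^ ℓ),
            (-1 : ℝ) ^ pc (k &&& (i ^^^ m)) * μ m * x i := by
          refine sum_congr rfl fun i hi => ?_
          rw [← sum_range_two_pow_xor_left (mem_range.mp hi)]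
          simp only [← Nat.xor_assoc, Nat.xor_self, Nat.zero_xor]
      _ = _ := by
          simp only [neg_one_pow_pc_and_xor hk, sum_mul, mul_sum]
          refine sum_congr rfl fun i _ => sum_congr rfl fun m _ => ?_
          ring
  rw [walsh, walsh, hconv]
  ring

lemma sum_range_two_pow_prod_testBit_s13 {R : Type*} [CommSemiring R] (ℓ : ℕ) (g : ℕ → Bool → R) :
    ∑ m ∈ range (2 ^ ℓ), ∏ i ∈ range ℓ, g i (m.testBit i)
      = ∏ i ∈ range ℓ, (g i false + g i true) := by
  induction ℓ with
  | zero => simp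
  | succ n ih =>
    have hdisj : Disjoint (range (2 ^ n)) ((range (2 ^ n)).map (addLeftEmbedding (2 ^ n))) := by
      rw [disjoint_left]
      intro m hm hm'
      simp only [mem_map, mem_range, addLeftEmbedding_apply] at hm hm'
      omega
    have hlow : ∀ m ∈ range (2 ^ n), ∏ i ∈ range (n + 1), g i (m.testBit i)
        = (∏ i ∈ range n, g i (m.testBit i)) * g n false := fun m hm => by
      rw [prod_range_succ, Nat.testBit_lt_two_pow (mem_range.mp hm)]
    have hhigh : ∀ m ∈ range (2 ^ n), ∏ i ∈ range (n + 1), g i ((2 ^ n + m).testBit i)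
        = (∏ i ∈ range n, g i (m.testBit i)) * g n true := fun m hm => by
      rw [prod_range_succ, Nat.testBit_two_pow_add_eq, Nat.testBit_lt_two_pow (mem_range.mp hm)]
      congr 1
      exact prod_congr rfl fun i hi => by
        rw [Nat.testBit_two_pow_add_gt (mem_range.mp hi)]
    rw [pow_succ, mul_two, range_add, sum_union hdisj, sum_map]
    simp only [addLeftEmbedding_apply]
    rw [sum_congr rfl hlow, sum_congr rfl hhigh, ← sum_mul, ← sum_mul, ih, prod_range_succ,
      mul_add]

theorem sum_neg_one_pow_pc_and_mul_mutDist (ℓ : ℕ) (p : ℕ → ℝ) {k : ℕ} (hk : k < 2 ^ ℓ) :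
    ∑ m ∈ range (2 ^ ℓ), (-1 : ℝ) ^ pc (k &&& m) * mutDist ℓ p m
      = ∏ i ∈ idx ℓ k, (1 - 2 * p i) := by
  have hfactor : ∀ m ∈ range (2 ^ ℓ), (-1 : ℝ) ^ pc (k &&& m) * mutDist ℓ p m
      = ∏ i ∈ range ℓ, (if k.testBit i && m.testBit i then -1 else 1)
          * (if m.testBit i then p i else 1 - p i) := fun m _ => by
    rw [neg_one_pow_pc_eq_prod (Nat.and_le_left.trans_lt hk), mutDist, ← prod_mul_distrib]
    simp only [Nat.testBit_and]
  rw [sum_congr rfl hfactor, sum_range_two_pow_prod_testBit_s13 ℓ fun i b =>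
    (if k.testBit i && b then (-1 : ℝ) else 1) * (if b then p i else 1 - p i), idx, prod_filter]
  refine prod_congr rfl fun i _ => ?_
  cases k.testBit i
  · simp
  · simp only [Bool.true_and, Bool.false_eq_true, ite_true, ite_false]; ring

theorem mutation_heuristic_walsh_general
    (ℓ : ℕ) (x : ℕ → ℝ)
    (p : ℕ → ℝ)
    (u : ℕ) (k : ℕ) (hk : k ∈ omg ℓ u) :
    Real.sqrt 2 ^ pc (cpl ℓ u) * walsh ℓ (mutH ℓ (mutDist ℓ p) x) k =
      (Real.sqrt 2 ^ pc (cpl ℓ u) * walsh ℓ x k) * ∏ i ∈ idx ℓ k, (1 - 2 * p i) := by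
  have hk' : k < 2 ^ ℓ := mem_range.mp (mem_filter.mp hk).1
  rw [walsh_mutH ℓ _ x hk', sum_neg_one_pow_pc_and_mul_mutDist ℓ p hk']
  ring

/-- **The mutation heuristic in the Walsh basis.**  For `x ∈ Λ`, independent bitwise
mutation with rates `p_i ∈ [0,1]`, `q_i = 1 - 2p_i`, and `y = U(x)`: for every `u ∈ Ω`
and `k ∈ Ω_u`, `ŷ_k^{(u)} = x̂_k^{(u)} ∏_{i ∈ I(k)} q_i`
(where `ẑ_k^{(u)} = 2^{#ū/2} (Wz)_k`). -/
theorem mutation_heuristic_walsh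
    (ℓ : ℕ) (hℓ : 1 ≤ ℓ) (x : ℕ → ℝ)
    (hx0 : ∀ i ∈ Finset.range (2 ^ ℓ), 0 ≤ x i)
    (hx1 : ∑ i ∈ Finset.range (2 ^ ℓ), x i = 1)
    (p : ℕ → ℝ) (hp : ∀ i < ℓ, p i ∈ Set.Icc (0 : ℝ) 1)
    (u : ℕ) (hu : u < 2 ^ ℓ) (k : ℕ) (hk : k ∈ omg ℓ u) :
    Real.sqrt 2 ^ pc (cpl ℓ u) * walsh ℓ (mutH ℓ (mutDist ℓ p) x) k =
      (Real.sqrt 2 ^ pc (cpl ℓ u) * walsh ℓ x k) * ∏ i ∈ idx ℓ k, (1 - 2 * p i) :=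
  mutation_heuristic_walsh_general ℓ x p u k hk
end
end

section
/- (Exact schema theorem for mutation.) Let x ∈ Λ, let U be the mutation heuristic for independent bitwise mutation with rates p_0,…,p_{ℓ−1} ∈ [0,1], and let y = U(x). Then for every u ∈ Ω, y^{(u)} = U^{(u)} x^{(u)}; explicitly, for every k ∈ Ω_u, y_k^{(u)} = Σ_{j ∈ Ω_u} μ^{(u)}_{k⊕j} x_j^{(u)}. -/
open Finset

noncomputable section

/-
Every `n ∈ Ω` splits uniquely as `n = j ⊕ b` with `j ∈ Ω_u` and `b ∈ Ω_ū`.  Summing the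
mutation heuristic over a schema, the `Ω_ū`-part of the mask is absorbed into `μ^{(u)}`,
because `μ^{(u)}_m` is invariant under `m ↦ b ⊕ m` for `b ∈ Ω_ū`; the `Ω_ū`-part of the
population index is then absorbed into `x^{(u)}`.
-/

section Schemata

variable {ℓ : ℕ}

@[simp]
lemma mem_omg {u v : ℕ} : v ∈ omg ℓ u ↔ v < 2 ^ ℓ ∧ v &&& u = v := by
  simp [omg]

lemma cpl_lt_two_pow {u : ℕ} (hu : u < 2 ^ ℓ) : cpl ℓ u < 2 ^ ℓ :=
  Nat.xor_lt_two_pow hu (Nat.sub_lt (Nat.two_pow_pos ℓ) one_pos)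

lemma and_cpl_self_s16 {u : ℕ} (hu : u < 2 ^ ℓ) : u &&& cpl ℓ u = 0 := by
  rw [cpl, Nat.and_xor_distrib_left, Nat.and_self, Nat.and_two_pow_sub_one_of_lt_two_pow hu,
    Nat.xor_self]

lemma and_xor_and_cpl_s16 {n : ℕ} (u : ℕ) (hn : n < 2 ^ ℓ) : (n &&& u) ^^^ (n &&& cpl ℓ u) = n := by
  rw [← Nat.and_xor_distrib_left, cpl, Nat.xor_xor_cancel_left,
    Nat.and_two_pow_sub_one_of_lt_two_pow hn]

lemma and_mem_omg {n u : ℕ} (hu : u < 2 ^ ℓ) : n &&& u ∈ omg ℓ u :=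
  mem_omg.mpr ⟨Nat.and_lt_two_pow n hu, by rw [Nat.land_assoc, Nat.and_self]⟩

lemma xor_mem_omg {v i b : ℕ} (hi : i ∈ omg ℓ v) (hb : b ∈ omg ℓ v) : i ^^^ b ∈ omg ℓ v := by
  rw [mem_omg] at hi hb ⊢
  exact ⟨Nat.xor_lt_two_pow hi.1 hb.1, by rw [Nat.and_xor_distrib_right, hi.2, hb.2]⟩

lemma and_eq_zero_of_mem_omg {v w j : ℕ} (hj : j ∈ omg ℓ v) (hvw : v &&& w = 0) :
    j &&& w = 0 := by
  rw [← (mem_omg.mp hj).2, Nat.land_assoc, hvw, Nat.and_zero]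

lemma xor_and_of_mem_omg {v j b : ℕ} (hj : j ∈ omg ℓ v) (hb : b &&& v = 0) :
    (j ^^^ b) &&& v = j := by
  rw [Nat.and_xor_distrib_right, (mem_omg.mp hj).2, hb, Nat.xor_zero]

lemma sum_range_eq_sum_omg_sum_omg_cpl {u : ℕ} (hu : u < 2 ^ ℓ) (f : ℕ → ℝ) :
    ∑ n ∈ range (2 ^ ℓ), f n = ∑ j ∈ omg ℓ u, ∑ b ∈ omg ℓ (cpl ℓ u), f (j ^^^ b) := by
  rw [← sum_product']
  refine sum_nbij' (fun n => (n &&& u, n &&& cpl ℓ u)) (fun q => q.1 ^^^ q.2)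
    (fun n _ => mem_product.mpr ⟨and_mem_omg hu, and_mem_omg (cpl_lt_two_pow hu)⟩)
    (fun q hq => mem_range.mpr (Nat.xor_lt_two_pow (mem_omg.mp (mem_product.mp hq).1).1
      (mem_omg.mp (mem_product.mp hq).2).1))
    (fun n hn => and_xor_and_cpl_s16 u (mem_range.mp hn)) (fun q hq => ?_)
    (fun n hn => by rw [and_xor_and_cpl_s16 u (mem_range.mp hn)])
  obtain ⟨hj, hb⟩ := mem_product.mp hq
  have hbu : q.2 &&& u = 0 := by
    rw [and_eq_zero_of_mem_omg hb (by rw [Nat.land_comm, and_cpl_self_s16 hu])]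
  have hju : q.1 &&& cpl ℓ u = 0 := and_eq_zero_of_mem_omg hj (and_cpl_self_s16 hu)
  refine Prod.ext (xor_and_of_mem_omg hj hbu) ?_
  show (q.1 ^^^ q.2) &&& cpl ℓ u = q.2
  rw [Nat.xor_comm, xor_and_of_mem_omg hb hju]

lemma sum_omg_xor_right {v b : ℕ} (hb : b ∈ omg ℓ v) (g : ℕ → ℝ) :
    ∑ i ∈ omg ℓ v, g (i ^^^ b) = ∑ i ∈ omg ℓ v, g i :=
  sum_nbij' (· ^^^ b) (· ^^^ b) (fun _ hi => xor_mem_omg hi hb) (fun _ hi => xor_mem_omg hi hb)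
    (fun a _ => Nat.xor_xor_cancel_right a b) (fun a _ => Nat.xor_xor_cancel_right a b)
    (fun _ _ => rfl)

lemma schAvg_xor_of_mem_omg_cpl {u b : ℕ} (hb : b ∈ omg ℓ (cpl ℓ u)) (f : ℕ → ℝ) (m : ℕ) :
    schAvg ℓ f u (b ^^^ m) = schAvg ℓ f u m := by
  simp only [schAvg, ← Nat.xor_assoc]
  exact sum_omg_xor_right hb (fun i => f (i ^^^ m))

lemma schAvg_mutH_eq_sum (μ x : ℕ → ℝ) (u k : ℕ) :
    schAvg ℓ (mutH ℓ μ x) u k = ∑ n ∈ range (2 ^ ℓ), schAvg ℓ μ u (k ^^^ n) * x n := by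
  simp only [schAvg, mutH, sum_mul]
  rw [sum_comm]
  exact sum_congr rfl fun n _ => sum_congr rfl fun i _ => by ac_rfl

theorem schAvg_mutH {u : ℕ} (hu : u < 2 ^ ℓ) (μ x : ℕ → ℝ) (k : ℕ) :
    schAvg ℓ (mutH ℓ μ x) u k = ∑ j ∈ omg ℓ u, schAvg ℓ μ u (k ^^^ j) * schAvg ℓ x u j := by
  rw [schAvg_mutH_eq_sum, sum_range_eq_sum_omg_sum_omg_cpl hu]
  refine sum_congr rfl fun j _ => ?_
  have absorb : ∀ b ∈ omg ℓ (cpl ℓ u),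
      schAvg ℓ μ u (k ^^^ (j ^^^ b)) * x (j ^^^ b) = schAvg ℓ μ u (k ^^^ j) * x (b ^^^ j) :=
    fun b hb => by
      rw [show k ^^^ (j ^^^ b) = b ^^^ (k ^^^ j) by ac_rfl, schAvg_xor_of_mem_omg_cpl hb,
        Nat.xor_comm j b]
  rw [sum_congr rfl absorb, ← mul_sum]
  rfl

end Schemata

theorem exact_schema_theorem_for_mutation_general
    (ℓ : ℕ) (x : ℕ → ℝ)
    (p : ℕ → ℝ)
    (u : ℕ) (hu : u < 2 ^ ℓ) (k : ℕ) :
    schAvg ℓ (mutH ℓ (mutDist ℓ p) x) u k =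
      ∑ j ∈ omg ℓ u, schAvg ℓ (mutDist ℓ p) u (k ^^^ j) * schAvg ℓ x u j :=
  schAvg_mutH hu (mutDist ℓ p) x k

/-- **Exact schema theorem for mutation.**  For `x ∈ Λ`, independent bitwise mutation
with rates `p_i ∈ [0,1]`, and `y = U(x)`: for every `u ∈ Ω`, `y^{(u)} = U^{(u)} x^{(u)}`;
explicitly, for every `k ∈ Ω_u`, `y_k^{(u)} = Σ_{j ∈ Ω_u} μ^{(u)}_{k⊕j} x_j^{(u)}`. -/
theorem exact_schema_theorem_for_mutation
    (ℓ : ℕ) (hℓ : 1 ≤ ℓ) (x : ℕ → ℝ)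
    (hx0 : ∀ i ∈ Finset.range (2 ^ ℓ), 0 ≤ x i)
    (hx1 : ∑ i ∈ Finset.range (2 ^ ℓ), x i = 1)
    (p : ℕ → ℝ) (hp : ∀ i < ℓ, p i ∈ Set.Icc (0 : ℝ) 1)
    (u : ℕ) (hu : u < 2 ^ ℓ) (k : ℕ) (hk : k ∈ omg ℓ u) :
    schAvg ℓ (mutH ℓ (mutDist ℓ p) x) u k =
      ∑ j ∈ omg ℓ u, schAvg ℓ (mutDist ℓ p) u (k ^^^ j) * schAvg ℓ x u j :=
  exact_schema_theorem_for_mutation_general ℓ x p u hu k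
end
end
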